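/- arXiv:1710.06818 — 2 statements merged into one kernel-verified Lean document; each statement's English description precedes it below -/
import Mathlib

section
/- Under the spherical Gaussian mixture model in ℝ^D, the third moment tensor satisfies E[x ⊗ x ⊗ x] = Σ_k π_k a_k ⊗ a_k ⊗ a_k + σ² Σ_{i=1}^D ( μ ⊗ e_i ⊗ e_i + e_i ⊗ μ ⊗ e_i + e_i ⊗ e_i ⊗ μ ), where μ = E[x] = Σ_k π_k a_k and e_i are standard basis vectors. -/
/-!
Each mixture component is a product of independent one-dimensional Gaussians, so its third
moment `E[x_i x_j x_k]` factorises according to which of the indices coincide, into the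
one-dimensional moments `E X = m`, `E X² = m² + v` and `E X³ = m³ + 3vm`; the last holds because
odd moments of a centred Gaussian vanish by symmetry. The mixture's moment is the `π`-weighted
sum of the components' moments, and `∑ i, e i ⊗ e i` contributes Kronecker deltas.
-/

open MeasureTheory ProbabilityTheory
open scoped NNReal ENNReal

section GaussianReal

variable {m : ℝ} {v : ℝ≥0}

lemma integrable_pow_gaussianReal (n : ℕ) : Integrable (fun x => x ^ n) (gaussianReal m v) := by
  rcases n.eq_zero_or_pos with rfl | hn
  · simp
  · refine ((memLp_id_gaussianReal' n (by simp)).integrable_norm_pow hn.ne').mono'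
      (by fun_prop) (ae_of_all _ fun x => ?_)
    simp [norm_pow]

lemma integral_sq_gaussianReal : ∫ x, x ^ 2 ∂gaussianReal m v = m ^ 2 + v := by
  have h := variance_eq_sub (memLp_id_gaussianReal' (μ := m) (v := v) 2 (by simp))
  rw [variance_id_gaussianReal] at h
  simp only [Pi.pow_apply, id_eq, integral_id_gaussianReal] at h
  linarith

lemma integral_pow_gaussianReal_zero_of_odd {n : ℕ} (hn : Odd n) :
    ∫ x, x ^ n ∂gaussianReal 0 v = 0 := by
  have h := integral_map (μ := gaussianReal 0 v) measurable_neg.aemeasurable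
    (continuous_pow n).aestronglyMeasurable
  rw [gaussianReal_map_neg, neg_zero] at h
  simp only [hn.neg_pow, integral_neg] at h
  linarith

lemma integral_comp_add_gaussianReal (f : ℝ → ℝ) :
    ∫ x, f x ∂gaussianReal m v = ∫ x, f (x + m) ∂gaussianReal 0 v := by
  rw [← (measurableEmbedding_addRight m).integral_map, gaussianReal_map_add_const, zero_add]

lemma integral_pow_three_gaussianReal : ∫ x, x ^ 3 ∂gaussianReal m v = m ^ 3 + 3 * v * m := by
  have hpow (n : ℕ) := integrable_pow_gaussianReal (m := 0) (v := v) n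
  have hmom1 := integral_pow_gaussianReal_zero_of_odd (v := v) odd_one
  have hmom2 : ∫ x, x ^ 2 ∂gaussianReal 0 v = v := by
    simpa using integral_sq_gaussianReal (m := 0)
  have hmom3 := integral_pow_gaussianReal_zero_of_odd (v := v) (n := 3) (by decide)
  rw [integral_comp_add_gaussianReal]
  calc ∫ x, (x + m) ^ 3 ∂gaussianReal 0 v
      = ∫ x, (x ^ 3 + 3 * m * x ^ 2 + 3 * m ^ 2 * x ^ 1 + m ^ 3) ∂gaussianReal 0 v := by
        congr 1 with x; ring
    _ = m ^ 3 + 3 * v * m := by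
        rw [integral_add (by fun_prop) (integrable_const _),
          integral_add (by fun_prop) (by fun_prop), integral_add (hpow 3) (by fun_prop),
          integral_const_mul, integral_const_mul, hmom1, hmom2, hmom3]
        simp only [zero_add, mul_zero, add_zero, integral_const, probReal_univ, smul_eq_mul,
          one_mul]
        ring

end GaussianReal

noncomputable abbrev sphericalGaussian {ι : Type*} [Fintype ι] (m : ι → ℝ) (v : ℝ≥0) :
    Measure (ι → ℝ) :=
  Measure.pi fun i => gaussianReal (m i) v

section SphericalGaussian

variable {ι : Type*} [Fintype ι] {m : ι → ℝ} {v : ℝ≥0}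

lemma memLp_eval_sphericalGaussian {p : ℝ≥0∞} (hp : p ≠ ∞) (i : ι) :
    MemLp (fun x => x i) p (sphericalGaussian m v) :=
  (memLp_id_gaussianReal' p hp).comp_measurePreserving (measurePreserving_eval _ i)

lemma integrable_eval_mul_eval_mul_eval_sphericalGaussian (i j k : ι) :
    Integrable (fun x => x i * x j * x k) (sphericalGaussian m v) := by
  have : ENNReal.HolderTriple 4 4 2 := ⟨by
    rw [show (4 : ℝ≥0∞) = 2 * 2 by norm_num, ENNReal.mul_inv (by simp) (by simp), ← mul_add,
      ENNReal.inv_two_add_inv_two, mul_one]⟩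
  have hij : MemLp (fun x => x i * x j) 2 (sphericalGaussian m v) :=
    (memLp_eval_sphericalGaussian (p := 4) (by simp) j).mul'
      (memLp_eval_sphericalGaussian (p := 4) (by simp) i)
  exact hij.integrable_mul (memLp_eval_sphericalGaussian (p := 2) (by simp) k)

lemma integral_comp_eval_sphericalGaussian {f : ℝ → ℝ} (hf : Measurable f) (i : ι) :
    ∫ x, f (x i) ∂sphericalGaussian m v = ∫ y, f y ∂gaussianReal (m i) v :=
  integral_comp_eval hf.aestronglyMeasurable

lemma iIndepFun_eval_sphericalGaussian :
    iIndepFun (fun i (x : ι → ℝ) => x i) (sphericalGaussian m v) :=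
  iIndepFun_pi (X := fun _ => id) fun _ => aemeasurable_id

lemma integral_eval_mul_eval_sphericalGaussian [DecidableEq ι] (i j : ι) :
    ∫ x, x i * x j ∂sphericalGaussian m v = m i * m j + v * if i = j then 1 else 0 := by
  rcases eq_or_ne i j with rfl | hij
  · simp_rw [← sq]
    rw [integral_comp_eval_sphericalGaussian (f := fun y => y ^ 2) (by fun_prop),
      integral_sq_gaussianReal]
    simp
  · rw [(iIndepFun_eval_sphericalGaussian.indepFun hij).integral_fun_mul_eq_mul_integral
      (measurable_pi_apply i).aestronglyMeasurable (measurable_pi_apply j).aestronglyMeasurable]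
    simp [hij, integral_eval]

lemma integral_eval_mul_eval_mul_eval_sphericalGaussian_of_ne {i j k : ι} (hik : i ≠ k)
    (hjk : j ≠ k) :
    ∫ x, x i * x j * x k ∂sphericalGaussian m v =
      (∫ x, x i * x j ∂sphericalGaussian m v) * m k :=
  ((iIndepFun_eval_sphericalGaussian.indepFun_mul_left measurable_pi_apply i j k hik hjk
    ).integral_mul_eq_mul_integral (by fun_prop)
      (measurable_pi_apply k).aestronglyMeasurable).trans (by simp [integral_eval])

lemma integral_eval_mul_eval_mul_eval_sphericalGaussian [DecidableEq ι] (i j k : ι) :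
    ∫ x, x i * x j * x k ∂sphericalGaussian m v =
      m i * m j * m k + v * (m i * (if j = k then 1 else 0) + m j * (if i = k then 1 else 0) +
        m k * (if i = j then 1 else 0)) := by
  obtain rfl | hik := eq_or_ne i k
  · obtain rfl | hji := eq_or_ne j i
    · simp_rw [← pow_three']
      rw [integral_comp_eval_sphericalGaussian (f := fun y => y ^ 3) (by fun_prop),
        integral_pow_three_gaussianReal]
      simp only [↓reduceIte, mul_one, add_right_inj]
      ring
    · have hperm : (fun x : ι → ℝ => x i * x j * x i) = fun x => x i * x i * x j := by
        ext x; ring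
      rw [hperm, integral_eval_mul_eval_mul_eval_sphericalGaussian_of_ne hji.symm hji.symm,
        integral_eval_mul_eval_sphericalGaussian]
      simp only [↓reduceIte, mul_one, hji, mul_zero, zero_add, hji.symm, add_zero]
      ring
  · obtain rfl | hjk := eq_or_ne j k
    · have hperm : (fun x : ι → ℝ => x i * x j * x j) = fun x => x j * x j * x i := by
        ext x; ring
      rw [hperm, integral_eval_mul_eval_mul_eval_sphericalGaussian_of_ne hik.symm hik.symm,
        integral_eval_mul_eval_sphericalGaussian]
      simp only [↓reduceIte, mul_one, hik, mul_zero, add_zero]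
      ring
    · rw [integral_eval_mul_eval_mul_eval_sphericalGaussian_of_ne hik hjk,
        integral_eval_mul_eval_sphericalGaussian]
      simp only [hik, hjk, if_false]
      split_ifs <;> ring

end SphericalGaussian

lemma integral_sum_smul_measure {α E K : Type*} [MeasurableSpace α] [NormedAddCommGroup E]
    [NormedSpace ℝ E] [Fintype K] (π : K → ℝ≥0) (ν : K → Measure α) {f : α → E}
    (hf : ∀ k, Integrable f (ν k)) :
    ∫ x, f x ∂Measure.sum (fun k => (π k : ℝ≥0∞) • ν k) = ∑ k, (π k : ℝ) • ∫ x, f x ∂ν k := by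
  rw [Measure.sum_fintype,
    integral_finsetSum_measure fun k _ => (hf k).smul_measure ENNReal.coe_ne_top]
  simp [NNReal.smul_def]

theorem gaussian_mixture_third_moment_general (D K : ℕ)
    (a : Fin K → Fin D → ℝ) (π : Fin K → ℝ≥0)
    (v : ℝ≥0)
    (μ : Measure (Fin D → ℝ))
    (hμ : μ = Measure.sum fun k : Fin K =>
      (π k : ℝ≥0∞) • Measure.pi fun d : Fin D => gaussianReal (a k d) v)
    (mean : Fin D → ℝ) (hmean : mean = fun d => ∑ k, (π k : ℝ) * a k d)
    (e : Fin D → Fin D → ℝ) (he : ∀ i d, e i d = if d = i then 1 else 0)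
    (d₁ d₂ d₃ : Fin D) :
    ∫ x, x d₁ * x d₂ * x d₃ ∂μ =
      (∑ k, (π k : ℝ) * (a k d₁ * a k d₂ * a k d₃)) +
      (v : ℝ) * ∑ i : Fin D,
        (mean d₁ * e i d₂ * e i d₃ + e i d₁ * mean d₂ * e i d₃ +
          e i d₁ * e i d₂ * mean d₃) := by
  have hδ (p q : Fin D) : ∑ i, e i p * e i q = if p = q then 1 else 0 := by
    simp [he]
  have hbasis : ∑ i, (mean d₁ * e i d₂ * e i d₃ + e i d₁ * mean d₂ * e i d₃ +
      e i d₁ * e i d₂ * mean d₃) = mean d₁ * (if d₂ = d₃ then 1 else 0) +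
        mean d₂ * (if d₁ = d₃ then 1 else 0) + mean d₃ * (if d₁ = d₂ then 1 else 0) := by
    simp only [← hδ, Finset.mul_sum, ← Finset.sum_add_distrib]
    exact Finset.sum_congr rfl fun i _ => by ring
  rw [hbasis, hμ, hmean, integral_sum_smul_measure _ _ fun k =>
    integrable_eval_mul_eval_mul_eval_sphericalGaussian (m := a k) (v := v) d₁ d₂ d₃]
  simp only [smul_eq_mul, integral_eval_mul_eval_mul_eval_sphericalGaussian, Finset.sum_mul,
    Finset.mul_sum, ← Finset.sum_add_distrib]
  exact Finset.sum_congr rfl fun k _ => by ring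

/-- Third-moment tensor of a mixture of spherical Gaussians:
`E[x⊗x⊗x] = Σ_k π_k a_k⊗a_k⊗a_k + σ² Σ_i (μ̄⊗e_i⊗e_i + e_i⊗μ̄⊗e_i + e_i⊗e_i⊗μ̄)`. -/
theorem gaussian_mixture_third_moment (D K : ℕ) (hD : 0 < D) (hK : 0 < K)
    (a : Fin K → Fin D → ℝ) (π : Fin K → ℝ≥0) (hπ : ∑ k, π k = 1)
    (v : ℝ≥0) (hv : 0 < v)
    (μ : Measure (Fin D → ℝ))
    (hμ : μ = Measure.sum fun k : Fin K =>
      (π k : ℝ≥0∞) • Measure.pi fun d : Fin D => gaussianReal (a k d) v)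
    (mean : Fin D → ℝ) (hmean : mean = fun d => ∑ k, (π k : ℝ) * a k d)
    (e : Fin D → Fin D → ℝ) (he : ∀ i d, e i d = if d = i then 1 else 0)
    (d₁ d₂ d₃ : Fin D) :
    ∫ x, x d₁ * x d₂ * x d₃ ∂μ =
      (∑ k, (π k : ℝ) * (a k d₁ * a k d₂ * a k d₃)) +
      (v : ℝ) * ∑ i : Fin D,
        (mean d₁ * e i d₂ * e i d₃ + e i d₁ * mean d₂ * e i d₃ +
          e i d₁ * e i d₂ * mean d₃) :=
  gaussian_mixture_third_moment_general D K a π v μ hμ mean hmean e he d₁ d₂ d₃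
end

section
/- In the Gamma-Poisson model (α_k ~ Gamma(c_k,b) independent, x | α coordinatewise independent Poisson with rate Aα), the matrix S defined by S = cov(x,x) − diag(E[x]) satisfies S = Σ_k var(α_k) a_k a_kᵀ = Σ_k (c_k/b²) a_k a_kᵀ, where a_k is the k-th column of A. -/
/-!
Law of total covariance. Given the Gamma draw `α`, the counts are independent Poisson variables
with rates `λ = A α`, so `E[x_d | α] = λ_d` and, the Poisson variance being equal to its mean,
`E[x_d x_e | α] = λ_d λ_e + [d = e] λ_d`. Averaging over `α` gives
`cov(x) = cov(λ) + diag(E[x])`, and `cov(λ) = A cov(α) Aᵀ` with `cov(α) = diag(c_k / b²)` by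
independence of the `α_k`. Both families of moments come from size-biasing identities:
`n Po(r){n} = r Po(r){n - 1}` and `x γ_{a,r}(x) = (a / r) γ_{a+1,r}(x)`.
-/

open MeasureTheory ProbabilityTheory
open scoped NNReal ENNReal Nat

theorem integrable_and_integral_eq_of_lintegral_ofReal_eq {Ω : Type*} [MeasurableSpace Ω]
    {μ : Measure Ω} {f : Ω → ℝ} (hf : 0 ≤ᵐ[μ] f) (hfm : AEStronglyMeasurable f μ) {r : ℝ}
    (hr : 0 ≤ r) (h : ∫⁻ ω, ENNReal.ofReal (f ω) ∂μ = ENNReal.ofReal r) :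
    Integrable f μ ∧ ∫ ω, f ω ∂μ = r :=
  ⟨⟨hfm, (hasFiniteIntegral_iff_ofReal hf).2 (h ▸ ENNReal.ofReal_lt_top)⟩,
    by rw [integral_eq_lintegral_of_nonneg_ae hf hfm, h, ENNReal.toReal_ofReal hr]⟩

theorem MeasureTheory.Measure.measurable_of_measurable_coe_singleton {β α : Type*}
    [MeasurableSpace β] [MeasurableSpace α] [Countable α] [MeasurableSingletonClass α]
    {κ : β → Measure α} (h : ∀ a, Measurable fun b => κ b {a}) : Measurable κ := by
  refine Measure.measurable_of_measurable_coe _ fun s hs => ?_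
  simp only [← Measure.tsum_indicator_apply_singleton _ s hs]
  refine Measurable.tsum fun a => ?_
  by_cases ha : a ∈ s <;> simp [ha, h a]

theorem measurable_measure_pi {β ι : Type*} [MeasurableSpace β] [Fintype ι] {α : ι → Type*}
    [∀ i, MeasurableSpace (α i)] [∀ i, Countable (α i)] [∀ i, MeasurableSingletonClass (α i)]
    {κ : ∀ i, β → Measure (α i)} [∀ i b, SigmaFinite (κ i b)] (hκ : ∀ i, Measurable (κ i)) :
    Measurable fun b => Measure.pi fun i => κ i b :=
  Measure.measurable_of_measurable_coe_singleton fun x => by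
    simp only [← Set.univ_pi_singleton x, Measure.pi_pi]
    exact Finset.measurable_prod _ fun i _ =>
      (Measure.measurable_coe (measurableSet_singleton _)).comp (hκ i)

section Poisson

theorem measurable_poissonMeasure : Measurable poissonMeasure :=
  Measure.measurable_of_measurable_coe_singleton fun n => by
    simp only [poissonMeasure_singleton]
    fun_prop

theorem lintegral_natCast_mul_poissonMeasure (r : ℝ≥0) (f : ℕ → ℝ≥0∞) :
    ∫⁻ n, n * f n ∂poissonMeasure r = r * ∫⁻ n, f (n + 1) ∂poissonMeasure r := by
  simp only [lintegral_countable', poissonMeasure_singleton]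
  rw [tsum_eq_zero_add' ENNReal.summable, ← ENNReal.tsum_mul_left]
  simp only [Nat.cast_zero, zero_mul, zero_add]
  refine tsum_congr fun n => ?_
  have hshift : ((n + 1 : ℕ) : ℝ≥0∞) * ENNReal.ofReal (Real.exp (-r) * r ^ (n + 1) / (n + 1)!)
      = r * ENNReal.ofReal (Real.exp (-r) * r ^ n / n !) := by
    rw [← ENNReal.ofReal_natCast, ← ENNReal.ofReal_coe_nnreal,
      ← ENNReal.ofReal_mul (by positivity), ← ENNReal.ofReal_mul (by positivity),
      Nat.factorial_succ]
    congr 1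
    push_cast
    field_simp
    ring
  rw [mul_right_comm, hshift]
  ring

theorem lintegral_natCast_poissonMeasure (r : ℝ≥0) :
    ∫⁻ n, (n : ℝ≥0∞) ∂poissonMeasure r = r := by
  simpa using lintegral_natCast_mul_poissonMeasure r 1

theorem lintegral_natCast_mul_self_poissonMeasure (r : ℝ≥0) :
    ∫⁻ n, (n : ℝ≥0∞) * n ∂poissonMeasure r = r * (r + 1) := by
  rw [lintegral_natCast_mul_poissonMeasure]
  push_cast
  rw [lintegral_add_right _ measurable_const, lintegral_natCast_poissonMeasure]
  simp

variable {ι : Type*} [Fintype ι] (r : ι → ℝ≥0)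

theorem lintegral_eval_pi_poissonMeasure (i : ι) :
    ∫⁻ x, (x i : ℝ≥0∞) ∂Measure.pi (fun i => poissonMeasure (r i)) = r i :=
  ((measurePreserving_eval (fun i => poissonMeasure (r i)) i).lintegral_comp
    (f := fun n : ℕ => (n : ℝ≥0∞)) .of_discrete).trans (lintegral_natCast_poissonMeasure (r i))

theorem lintegral_eval_mul_eval_pi_poissonMeasure [DecidableEq ι] (i j : ι) :
    ∫⁻ x, (x i : ℝ≥0∞) * x j ∂Measure.pi (fun i => poissonMeasure (r i))
      = r i * r j + if i = j then (r i : ℝ≥0∞) else 0 := by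
  split_ifs with hij
  · subst hij
    refine ((measurePreserving_eval (fun i => poissonMeasure (r i)) i).lintegral_comp
      (f := fun n : ℕ => (n : ℝ≥0∞) * n) .of_discrete).trans ?_
    rw [lintegral_natCast_mul_self_poissonMeasure]
    ring
  · have hindep := (iIndepFun_pi (μ := fun i => poissonMeasure (r i))
      (X := fun _ (n : ℕ) => (n : ℝ≥0∞)) fun _ => Measurable.of_discrete.aemeasurable).indepFun hij
    refine (lintegral_mul_eq_lintegral_mul_lintegral_of_indepFun''
      (f := fun x : ι → ℕ => (x i : ℝ≥0∞)) (g := fun x => (x j : ℝ≥0∞))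
      Measurable.of_discrete.aemeasurable Measurable.of_discrete.aemeasurable hindep).trans ?_
    rw [lintegral_eval_pi_poissonMeasure, lintegral_eval_pi_poissonMeasure, add_zero]

end Poisson

section Gamma

variable {a r : ℝ}

theorem gammaPDF_mul_ofReal (ha : 0 < a) (hr : 0 < r) (x : ℝ) :
    gammaPDF a r x * ENNReal.ofReal x = ENNReal.ofReal (a / r) * gammaPDF (a + 1) r x := by
  rcases lt_or_ge x 0 with hx | hx
  · simp [gammaPDF_of_neg hx]
  rw [gammaPDF_of_nonneg hx, gammaPDF_of_nonneg hx, ← ENNReal.ofReal_mul (by positivity),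
    ← ENNReal.ofReal_mul (by positivity), add_sub_cancel_right, Real.Gamma_add_one ha.ne',
    Real.rpow_add_one hr.ne']
  congr 1
  rcases hx.eq_or_lt with rfl | hx
  · simp [Real.zero_rpow ha.ne']
  rw [Real.rpow_sub_one hx.ne']
  have := (Real.Gamma_pos_of_pos ha).ne'
  field_simp

theorem lintegral_ofReal_mul_gammaMeasure (ha : 0 < a) (hr : 0 < r) {f : ℝ → ℝ≥0∞}
    (hf : Measurable f) :
    ∫⁻ x, ENNReal.ofReal x * f x ∂gammaMeasure a r
      = ENNReal.ofReal (a / r) * ∫⁻ x, f x ∂gammaMeasure (a + 1) r := by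
  simp only [gammaMeasure]
  rw [lintegral_withDensity_eq_lintegral_mul _ (show Measurable (gammaPDF a r) from
      (measurable_gammaPDFReal a r).ennreal_ofReal) (by fun_prop),
    lintegral_withDensity_eq_lintegral_mul _ (show Measurable (gammaPDF (a + 1) r) from
      (measurable_gammaPDFReal (a + 1) r).ennreal_ofReal) hf,
    ← lintegral_const_mul' _ _ ENNReal.ofReal_ne_top]
  refine lintegral_congr fun x => ?_
  simp only [Pi.mul_apply, ← mul_assoc, gammaPDF_mul_ofReal ha hr]

theorem ae_nonneg_gammaMeasure : ∀ᵐ x ∂gammaMeasure a r, 0 ≤ x := by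
  simp only [ae_iff, not_le]
  change gammaMeasure a r (Set.Iio 0) = 0
  rw [gammaMeasure, withDensity_apply _ measurableSet_Iio]
  exact lintegral_gammaPDF_of_nonpos le_rfl

theorem lintegral_ofReal_gammaMeasure (ha : 0 < a) (hr : 0 < r) :
    ∫⁻ x, ENNReal.ofReal x ∂gammaMeasure a r = ENNReal.ofReal (a / r) := by
  have := isProbabilityMeasure_gammaMeasure (add_pos ha one_pos) hr
  simpa using lintegral_ofReal_mul_gammaMeasure ha hr (f := 1) measurable_const

theorem lintegral_ofReal_sq_gammaMeasure (ha : 0 < a) (hr : 0 < r) :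
    ∫⁻ x, ENNReal.ofReal (x ^ 2) ∂gammaMeasure a r = ENNReal.ofReal (a * (a + 1) / r ^ 2) := by
  have hsq : (fun x => ENNReal.ofReal (x ^ 2)) =ᵐ[gammaMeasure a r]
      fun x => ENNReal.ofReal x * ENNReal.ofReal x := by
    filter_upwards [ae_nonneg_gammaMeasure] with x hx
    rw [sq, ENNReal.ofReal_mul hx]
  rw [lintegral_congr_ae hsq, lintegral_ofReal_mul_gammaMeasure ha hr ENNReal.measurable_ofReal,
    lintegral_ofReal_gammaMeasure (by positivity) hr, ← ENNReal.ofReal_mul (by positivity)]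
  congr 1
  field_simp

theorem integrable_and_integral_id_gammaMeasure (ha : 0 < a) (hr : 0 < r) :
    Integrable id (gammaMeasure a r) ∧ ∫ x, x ∂gammaMeasure a r = a / r :=
  integrable_and_integral_eq_of_lintegral_ofReal_eq ae_nonneg_gammaMeasure
    aestronglyMeasurable_id (by positivity) (lintegral_ofReal_gammaMeasure ha hr)

theorem integrable_and_integral_sq_gammaMeasure (ha : 0 < a) (hr : 0 < r) :
    Integrable (fun x => x ^ 2) (gammaMeasure a r) ∧
      ∫ x, x ^ 2 ∂gammaMeasure a r = a * (a + 1) / r ^ 2 :=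
  integrable_and_integral_eq_of_lintegral_ofReal_eq (ae_of_all _ fun x => sq_nonneg x)
    (by fun_prop) (by positivity) (lintegral_ofReal_sq_gammaMeasure ha hr)

theorem memLp_id_gammaMeasure (ha : 0 < a) (hr : 0 < r) : MemLp id 2 (gammaMeasure a r) :=
  (memLp_two_iff_integrable_sq aestronglyMeasurable_id).2
    (integrable_and_integral_sq_gammaMeasure ha hr).1

theorem variance_id_gammaMeasure (ha : 0 < a) (hr : 0 < r) :
    Var[id; gammaMeasure a r] = a / r ^ 2 := by
  have := isProbabilityMeasure_gammaMeasure ha hr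
  rw [variance_eq_sub (memLp_id_gammaMeasure ha hr)]
  simp only [id, Pi.pow_apply, (integrable_and_integral_sq_gammaMeasure ha hr).2,
    (integrable_and_integral_id_gammaMeasure ha hr).2]
  field_simp
  ring

end Gamma

section Pi

variable {ι : Type*} [Fintype ι] {μ : ι → Measure ℝ}

theorem ae_nonneg_eval_pi [∀ i, SigmaFinite (μ i)] (h : ∀ i, ∀ᵐ x ∂μ i, 0 ≤ x) :
    ∀ᵐ x ∂Measure.pi μ, ∀ i, 0 ≤ x i :=
  ae_all_iff.2 fun i => Measure.tendsto_eval_ae_ae.eventually (h i)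

variable [∀ i, IsProbabilityMeasure (μ i)]

theorem memLp_eval_pi (h : ∀ i, MemLp id 2 (μ i)) (i : ι) :
    MemLp (fun x => x i) 2 (Measure.pi μ) :=
  (h i).comp_measurePreserving (measurePreserving_eval μ i)

theorem covariance_eval_pi [DecidableEq ι] (h : ∀ i, MemLp id 2 (μ i)) (i j : ι) :
    cov[fun x => x i, fun x => x j; Measure.pi μ] = if i = j then Var[id; μ i] else 0 := by
  split_ifs with hij
  · subst hij
    rw [covariance_self (measurable_pi_apply i).aemeasurable]
    exact (measurePreserving_eval μ i).variance_fun_comp aemeasurable_id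
  · have hindep := (iIndepFun_pi (μ := μ) (X := fun _ => id) fun _ => aemeasurable_id).indepFun hij
    exact hindep.covariance_eq_zero (memLp_eval_pi h i) (memLp_eval_pi h j)

theorem covariance_sum_mul_eval_pi (h : ∀ i, MemLp id 2 (μ i)) (a b : ι → ℝ) :
    cov[fun x => ∑ i, a i * x i, fun x => ∑ i, b i * x i; Measure.pi μ]
      = ∑ i, a i * b i * Var[id; μ i] := by
  classical
  rw [covariance_fun_sum_fun_sum (fun i => (memLp_eval_pi h i).const_mul (a i))
    (fun i => (memLp_eval_pi h i).const_mul (b i))]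
  simp only [covariance_const_mul_left, covariance_const_mul_right, covariance_eval_pi h]
  simp only [mul_ite, mul_zero, Finset.sum_ite_eq, Finset.mem_univ, if_true]
  exact Finset.sum_congr rfl fun i _ => by ring

end Pi

noncomputable def mixedPoisson {Ω ι : Type*} [MeasurableSpace Ω] [Fintype ι] (μ : Measure Ω)
    (rate : ι → Ω → ℝ) : Measure (ι → ℕ) :=
  μ.bind fun ω => Measure.pi fun i => poissonMeasure (Real.toNNReal (rate i ω))

namespace MixedPoisson

variable {Ω ι : Type*} [MeasurableSpace Ω] [Fintype ι] {μ : Measure Ω} {rate : ι → Ω → ℝ}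

theorem measurable_kernel (hrate : ∀ i, Measurable (rate i)) :
    Measurable fun ω => Measure.pi fun i => poissonMeasure (Real.toNNReal (rate i ω)) :=
  measurable_measure_pi fun i => measurable_poissonMeasure.comp (hrate i).real_toNNReal

theorem lintegral_eq (hrate : ∀ i, Measurable (rate i)) {f : (ι → ℕ) → ℝ≥0∞} :
    ∫⁻ x, f x ∂mixedPoisson μ rate
      = ∫⁻ ω, ∫⁻ x, f x ∂Measure.pi (fun i => poissonMeasure (Real.toNNReal (rate i ω))) ∂μ :=
  Measure.lintegral_bind (measurable_kernel hrate).aemeasurable Measurable.of_discrete.aemeasurable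

theorem isProbabilityMeasure [IsProbabilityMeasure μ] (hrate : ∀ i, Measurable (rate i)) :
    IsProbabilityMeasure (mixedPoisson μ rate) := by
  constructor
  simpa using lintegral_eq (μ := μ) hrate (f := 1)

theorem integrable_and_integral_eval (hrate : ∀ i, Measurable (rate i))
    (hnonneg : ∀ i, 0 ≤ᵐ[μ] rate i) (hint : ∀ i, Integrable (rate i) μ) (i : ι) :
    Integrable (fun x => (x i : ℝ)) (mixedPoisson μ rate) ∧
      ∫ x, (x i : ℝ) ∂mixedPoisson μ rate = ∫ ω, rate i ω ∂μ := by
  refine integrable_and_integral_eq_of_lintegral_ofReal_eq (ae_of_all _ fun x => Nat.cast_nonneg _)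
    Measurable.of_discrete.aestronglyMeasurable (integral_nonneg_of_ae (hnonneg i)) ?_
  simp only [ENNReal.ofReal_natCast, lintegral_eq hrate, lintegral_eval_pi_poissonMeasure]
  exact (ofReal_integral_eq_lintegral_ofReal (hint i) (hnonneg i)).symm

theorem integrable_and_integral_eval_mul_eval [IsFiniteMeasure μ] [DecidableEq ι]
    (hrate : ∀ i, Measurable (rate i)) (hnonneg : ∀ i, 0 ≤ᵐ[μ] rate i)
    (hL2 : ∀ i, MemLp (rate i) 2 μ) (i j : ι) :
    Integrable (fun x => (x i : ℝ) * x j) (mixedPoisson μ rate) ∧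
      ∫ x, (x i : ℝ) * x j ∂mixedPoisson μ rate
        = ∫ ω, rate i ω * rate j ω ∂μ + if i = j then ∫ ω, rate i ω ∂μ else 0 := by
  have hprod : Integrable (fun ω => rate i ω * rate j ω) μ := (hL2 i).integrable_mul (hL2 j)
  have hprod_nonneg : 0 ≤ᵐ[μ] fun ω => rate i ω * rate j ω := by
    filter_upwards [hnonneg i, hnonneg j] with ω hi hj using mul_nonneg hi hj
  have hmean_nonneg : 0 ≤ ∫ ω, rate i ω ∂μ := integral_nonneg_of_ae (hnonneg i)
  refine integrable_and_integral_eq_of_lintegral_ofReal_eq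
    (ae_of_all _ fun x => by positivity) Measurable.of_discrete.aestronglyMeasurable
    (add_nonneg (integral_nonneg_of_ae hprod_nonneg) (by split_ifs <;> simp [hmean_nonneg])) ?_
  have hinner : ∀ᵐ ω ∂μ, ∫⁻ x, (x i : ℝ≥0∞) * x j
      ∂Measure.pi (fun i => poissonMeasure (Real.toNNReal (rate i ω)))
      = ENNReal.ofReal (rate i ω * rate j ω) + if i = j then ENNReal.ofReal (rate i ω) else 0 := by
    filter_upwards [hnonneg i] with ω hi
    rw [lintegral_eval_mul_eval_pi_poissonMeasure, ENNReal.ofReal_mul hi]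
    rfl
  simp only [ENNReal.ofReal_mul (Nat.cast_nonneg _), ENNReal.ofReal_natCast, lintegral_eq hrate]
  rw [lintegral_congr_ae hinner, lintegral_add_left' (by fun_prop),
    ← ofReal_integral_eq_lintegral_ofReal hprod hprod_nonneg]
  split_ifs
  · rw [← ofReal_integral_eq_lintegral_ofReal ((hL2 i).integrable one_le_two) (hnonneg i),
      ENNReal.ofReal_add (integral_nonneg_of_ae hprod_nonneg) hmean_nonneg]
  · simp

theorem covariance_sub_integral [IsProbabilityMeasure μ] [DecidableEq ι]
    (hrate : ∀ i, Measurable (rate i)) (hnonneg : ∀ i, 0 ≤ᵐ[μ] rate i)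
    (hL2 : ∀ i, MemLp (rate i) 2 μ) (i j : ι) :
    cov[fun x => (x i : ℝ), fun x => (x j : ℝ); mixedPoisson μ rate]
        - (if i = j then ∫ x, (x i : ℝ) ∂mixedPoisson μ rate else 0)
      = cov[rate i, rate j; μ] := by
  have := isProbabilityMeasure (μ := μ) hrate
  have hmean := integrable_and_integral_eval hrate hnonneg fun i => (hL2 i).integrable one_le_two
  have hsecond := integrable_and_integral_eval_mul_eval hrate hnonneg hL2
  have hcount (i : ι) : MemLp (fun x => (x i : ℝ)) 2 (mixedPoisson μ rate) :=
    (memLp_two_iff_integrable_sq Measurable.of_discrete.aestronglyMeasurable).2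
      (by simpa only [sq] using (hsecond i i).1)
  rw [covariance_eq_sub (hcount i) (hcount j), covariance_eq_sub (hL2 i) (hL2 j)]
  simp only [Pi.mul_apply, (hsecond i j).2, (hmean i).2, (hmean j).2]
  split_ifs <;> ring

end MixedPoisson

theorem gamma_poisson_second_moment_general (D K : ℕ)
    (A : Matrix (Fin D) (Fin K) ℝ) (hA : ∀ d k, 0 ≤ A d k)
    (c : Fin K → ℝ) (hc : ∀ k, 0 < c k) (b : ℝ) (hb : 0 < b)
    (ν : Measure (Fin D → ℕ))
    (hν : ν = (Measure.pi fun k : Fin K => gammaMeasure (c k) b).bind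
      fun α : Fin K → ℝ => Measure.pi fun d : Fin D =>
        poissonMeasure (Real.toNNReal (∑ k, A d k * α k)))
    (m : Fin D → ℝ) (hm : ∀ d, m d = ∫ x, (x d : ℝ) ∂ν)
    (d₁ d₂ : Fin D) :
    (∫ x, ((x d₁ : ℝ) - m d₁) * ((x d₂ : ℝ) - m d₂) ∂ν) -
        (if d₁ = d₂ then m d₁ else 0) =
      ∑ k, (c k / b ^ 2) * (A d₁ k * A d₂ k) := by
  have := fun k => isProbabilityMeasure_gammaMeasure (hc k) hb
  set G := Measure.pi fun k => gammaMeasure (c k) b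
  set rate : Fin D → (Fin K → ℝ) → ℝ := fun d α => ∑ k, A d k * α k
  have hGamma_L2 (k : Fin K) : MemLp id 2 (gammaMeasure (c k) b) := memLp_id_gammaMeasure (hc k) hb
  have hrate (d : Fin D) : Measurable (rate d) := by fun_prop
  have hnonneg (d : Fin D) : 0 ≤ᵐ[G] rate d := by
    filter_upwards [ae_nonneg_eval_pi fun k => ae_nonneg_gammaMeasure] with α hα
    exact Finset.sum_nonneg fun k _ => mul_nonneg (hA d k) (hα k)
  have hL2 (d : Fin D) : MemLp (rate d) 2 G :=
    memLp_finsetSum _ fun k _ => (memLp_eval_pi hGamma_L2 k).const_mul _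
  have hν' : ν = mixedPoisson G rate := hν
  calc _ = cov[fun x => (x d₁ : ℝ), fun x => (x d₂ : ℝ); ν]
        - (if d₁ = d₂ then ∫ x, (x d₁ : ℝ) ∂ν else 0) := by simp only [hm]; rfl
    _ = cov[rate d₁, rate d₂; G] :=
        hν' ▸ MixedPoisson.covariance_sub_integral hrate hnonneg hL2 d₁ d₂
    _ = ∑ k, A d₁ k * A d₂ k * Var[id; gammaMeasure (c k) b] :=
        covariance_sum_mul_eval_pi hGamma_L2 _ _
    _ = _ := Finset.sum_congr rfl fun k _ => by rw [variance_id_gammaMeasure (hc k) hb]; ring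

/-- In the Gamma-Poisson model, `S = cov(x,x) − diag(E[x])` satisfies
`S = Σ_k var(α_k) a_k a_kᵀ = Σ_k (c_k/b²) a_k a_kᵀ`, where `a_k` is the `k`-th
column of `A`. -/
theorem gamma_poisson_second_moment (D K : ℕ) (hD : 0 < D) (hK : 0 < K)
    (A : Matrix (Fin D) (Fin K) ℝ) (hA : ∀ d k, 0 ≤ A d k)
    (c : Fin K → ℝ) (hc : ∀ k, 0 < c k) (b : ℝ) (hb : 0 < b)
    (ν : Measure (Fin D → ℕ))
    (hν : ν = (Measure.pi fun k : Fin K => gammaMeasure (c k) b).bind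
      fun α : Fin K → ℝ => Measure.pi fun d : Fin D =>
        poissonMeasure (Real.toNNReal (∑ k, A d k * α k)))
    (m : Fin D → ℝ) (hm : ∀ d, m d = ∫ x, (x d : ℝ) ∂ν)
    (d₁ d₂ : Fin D) :
    (∫ x, ((x d₁ : ℝ) - m d₁) * ((x d₂ : ℝ) - m d₂) ∂ν) -
        (if d₁ = d₂ then m d₁ else 0) =
      ∑ k, (c k / b ^ 2) * (A d₁ k * A d₂ k) :=
  gamma_poisson_second_moment_general D K A hA c hc b hb ν hν m hm d₁ d₂
end
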